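/- Every HRRCDR instance in which each resident's preference list has length at most 2, each hospital's preference list has length at most 2, every region has size at most 2, and for every region E of size 2 at most one resident is acceptable to both hospitals of E, admits a strongly stable matching. -/

import Mathlib

/-- `a` is strictly preferred to `b` in the strictly ordered preference list `l`
(most preferred first). -/
def ListPref {α : Type*} [DecidableEq α] (l : List α) (a b : α) : Prop :=
  b ∈ l ∧ l.idxOf a < l.idxOf b

/-- An instance of the Hospitals/Residents problem with Regional Caps (HRRC):
residents `R`, hospitals `H`, strict preference lists on both sides,
hospital capacities `q`, a family `regions` of regions with regional caps `cap`. -/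
structure HRRC (R H : Type*) where
  prefR : R → List H
  prefH : H → List R
  q : H → ℕ
  regions : Set (Finset H)
  cap : Finset H → ℕ

namespace HRRC

variable {R H : Type*} [DecidableEq R] [DecidableEq H]

/-- Well-formedness: preference lists are strict (no repetitions), acceptability is
mutual, and regions are nonempty. -/
def WellFormed (I : HRRC R H) : Prop :=
  (∀ r, (I.prefR r).Nodup) ∧ (∀ h, (I.prefH h).Nodup) ∧
  (∀ r h, h ∈ I.prefR r ↔ r ∈ I.prefH h) ∧
  (∀ E ∈ I.regions, E.Nonempty)

/-- `M(h)`: the set of residents assigned to hospital `h`. -/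
def assignedTo (M : Finset (R × H)) (h : H) : Finset R :=
  (M.filter fun p => p.2 = h).image Prod.fst

/-- `M(E)`: the set of residents assigned to some hospital in the region `E`. -/
def assignedIn (M : Finset (R × H)) (E : Finset H) : Finset R :=
  (M.filter fun p => p.2 ∈ E).image Prod.fst

/-- `M` is a matching: pairs are mutually acceptable, each resident has at most one
hospital, and no hospital exceeds its capacity. -/
def IsMatching (I : HRRC R H) (M : Finset (R × H)) : Prop :=
  (∀ p ∈ M, p.2 ∈ I.prefR p.1 ∧ p.1 ∈ I.prefH p.2) ∧
  (∀ r h h', (r, h) ∈ M → (r, h') ∈ M → h = h') ∧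
  (∀ h, (assignedTo M h).card ≤ I.q h)

/-- Feasibility: all regional caps are respected. -/
def FeasibleCaps (I : HRRC R H) (M : Finset (R × H)) : Prop :=
  ∀ E ∈ I.regions, (assignedIn M E).card ≤ I.cap E

/-- `M \ {(r, M(r))} ∪ {(r, h)}`. -/
def move (M : Finset (R × H)) (r : R) (h : H) : Finset (R × H) :=
  (M.filter fun p => p.1 ≠ r) ∪ {(r, h)}

/-- `(r, h)` is a blocking pair for `M`. -/
def IsBlockingPair (I : HRRC R H) (M : Finset (R × H)) (r : R) (h : H) : Prop :=
  (r, h) ∉ M ∧ (h ∈ I.prefR r ∧ r ∈ I.prefH h) ∧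
  ((∀ h', (r, h') ∉ M) ∨ ∃ h', (r, h') ∈ M ∧ ListPref (I.prefR r) h h') ∧
  ((assignedTo M h).card < I.q h ∨ ∃ r' ∈ assignedTo M h, ListPref (I.prefH h) r r')

/-- `(r, h)` is a strong blocking pair for `M`. -/
def IsSBP (I : HRRC R H) (M : Finset (R × H)) (r : R) (h : H) : Prop :=
  I.IsBlockingPair M r h ∧
  (I.FeasibleCaps (move M r h) ∨ ∃ r' ∈ assignedTo M h, ListPref (I.prefH h) r r')

/-- `M` is a strongly stable matching of `I`. -/
def IsStronglyStable (I : HRRC R H) (M : Finset (R × H)) : Prop :=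
  I.IsMatching M ∧ I.FeasibleCaps M ∧ ∀ r h, ¬ I.IsSBP M r h

end HRRC

/-!
Generalized deferred acceptance: Tarski's theorem gives a fixed point of the map alternating the
residents' choice (each resident keeps her best available hospital) with a hospital-side choice
driven by a priority on pairs (each hospital keeps its `q h` best applicants, each region the
`cap E` best of these). Both choices are substitutable, which is what makes the map monotone.
A pair rejected at the fixed point faces a hospital or a region filled with pairs of higher
priority. Pairs at a hospital are ranked by the hospital's list, so that hospital prefers all its
residents to the rejected one. The two hospitals of a region are ordered by the preference of
their unique common resident, so a resident who would move inside her region already holds a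
pair of higher priority there, and any other move overflows the cap.
-/

open Finset

section KeyRank

variable {α β : Type*} [LinearOrder β] (κ : α → β)

def keyRank (S : Finset α) (a : α) : ℕ := #{b ∈ S | κ b < κ a}

def keyBest (k : ℕ) (S : Finset α) : Finset α := {a ∈ S | keyRank κ S a < k}

variable {κ}

lemma keyRank_mono {S T : Finset α} (hST : S ⊆ T) (a : α) : keyRank κ S a ≤ keyRank κ T a :=
  card_le_card (filter_subset_filter _ hST)

lemma keyRank_le_keyRank (S : Finset α) {a b : α} (hab : κ a ≤ κ b) :
    keyRank κ S a ≤ keyRank κ S b :=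
  card_le_card fun c hc => by
    simp only [mem_filter] at hc ⊢
    exact ⟨hc.1, hc.2.trans_le hab⟩

lemma keyRank_le_card (S : Finset α) (a : α) : keyRank κ S a ≤ #S := card_filter_le _ _

lemma keyRank_lt_keyRank {S : Finset α} {a b : α} (ha : a ∈ S) (hab : κ a < κ b) :
    keyRank κ S a < keyRank κ S b := by
  refine card_lt_card ((ssubset_iff_of_subset fun c hc => ?_).2 ⟨a, by simp [ha, hab], by simp⟩)
  simp only [mem_filter] at hc ⊢
  exact ⟨hc.1, hc.2.trans hab⟩

lemma forall_lt_of_card_le_keyRank {S : Finset α} {a : α} (h : #S ≤ keyRank κ S a) :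
    ∀ b ∈ S, κ b < κ a :=
  card_filter_eq_iff.1 (le_antisymm (card_filter_le _ _) h)

lemma keyRank_filter_mem_eq_sum {ι : Type*} [DecidableEq ι] (g : α → ι) (S : Finset α)
    (E : Finset ι) (a : α) :
    keyRank κ {b ∈ S | g b ∈ E} a = ∑ i ∈ E, keyRank κ {b ∈ S | g b = i} a := by
  rw [keyRank, card_eq_sum_card_fiberwise (f := g) (t := E) fun b hb => by
    simp only [coe_filter, mem_filter] at hb; exact hb.1.2]
  refine sum_congr rfl fun i hi => congrArg card ?_
  ext b
  simp only [mem_filter]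
  constructor
  · rintro ⟨⟨⟨hb, -⟩, hba⟩, rfl⟩; exact ⟨⟨hb, rfl⟩, hba⟩
  · rintro ⟨⟨hb, rfl⟩, hba⟩; exact ⟨⟨⟨hb, hi⟩, hba⟩, rfl⟩

lemma keyBest_subset (k : ℕ) (S : Finset α) : keyBest κ k S ⊆ S := filter_subset _ _

lemma mem_keyBest_of_subset {S T : Finset α} {k : ℕ} {a : α} (hST : S ⊆ T) (ha : a ∈ S)
    (haT : a ∈ keyBest κ k T) : a ∈ keyBest κ k S :=
  mem_filter.2 ⟨ha, (keyRank_mono hST a).trans_lt (mem_filter.1 haT).2⟩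

lemma card_keyBest_le (hκ : Function.Injective κ) (k : ℕ) (S : Finset α) :
    #(keyBest κ k S) ≤ k := by
  refine (card_le_card_of_injOn (keyRank κ S) (t := range k) ?_ ?_).trans_eq (card_range k)
  · intro a ha
    simpa using (mem_filter.1 ha).2
  · intro a ha b hb hab
    by_contra hne
    rcases lt_or_gt_of_ne (hκ.ne hne) with h | h
    · exact (keyRank_lt_keyRank (keyBest_subset k S ha) h).ne hab
    · exact (keyRank_lt_keyRank (keyBest_subset k S hb) h).ne' hab

lemma min_le_keyRank_keyBest (k : ℕ) (S : Finset α) (a : α) :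
    min k (keyRank κ S a) ≤ keyRank κ (keyBest κ k S) a := by
  have below : ∀ g, κ g ≤ κ a → (∀ b ∈ S, κ b < κ g → keyRank κ S b < k) →
      keyRank κ S g ≤ keyRank κ (keyBest κ k S) a := fun g hga hg =>
    card_le_card fun b hb => by
      simp only [keyBest, mem_filter] at hb ⊢
      exact ⟨⟨hb.1, hg b hb.1 hb.2⟩, hb.2.trans_le hga⟩
  by_cases hex : ∃ g ∈ S, κ g < κ a ∧ k ≤ keyRank κ S g
  · -- the least element below `a` whose rank reaches `k` has only best elements below it
    obtain ⟨g, hg, hgmin⟩ := exists_min_image {g ∈ S | κ g < κ a ∧ k ≤ keyRank κ S g} κ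
      (by simpa [Finset.Nonempty] using hex)
    obtain ⟨hgS, hga, hkg⟩ := by simpa using hg
    refine (min_le_left _ _).trans (hkg.trans (below g hga.le fun b hb hbg => ?_))
    by_contra! hkb
    exact (hgmin b (by simp [hb, hbg.trans hga, hkb])).not_gt hbg
  · push Not at hex
    exact (min_le_right _ _).trans (below a le_rfl hex)

lemma keyRank_keyBest (hκ : Function.Injective κ) (k : ℕ) (S : Finset α) (a : α) :
    keyRank κ (keyBest κ k S) a = min k (keyRank κ S a) :=
  le_antisymm
    (le_min ((keyRank_le_card _ a).trans (card_keyBest_le hκ k S))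
      (keyRank_mono (keyBest_subset k S) a))
    (min_le_keyRank_keyBest k S a)

end KeyRank

section Substitutable

variable {α : Type*} [DecidableEq α]

def Substitutable (C : Finset α → Finset α) : Prop := Monotone fun X => X \ C X

theorem exists_choice_eq_of_substitutable [Fintype α] (A : Finset α)
    {C₁ C₂ : Finset α → Finset α} (hC₁ : ∀ X, C₁ X ⊆ X) (hC₂ : ∀ X, C₂ X ⊆ X)
    (hs₁ : Substitutable C₁) (hs₂ : Substitutable C₂) :
    ∃ X ⊆ A, C₁ X = C₂ (A \ (X \ C₁ X)) := by
  let Φ : Finset α →o Finset α :=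
    ⟨fun X => A \ ((A \ (X \ C₁ X)) \ C₂ (A \ (X \ C₁ X))),
      fun _ _ hXY => sdiff_le_sdiff_left (hs₂ (sdiff_le_sdiff_left (hs₁ hXY)))⟩
  let _ := Fintype.toCompleteLattice (Finset α)
  set X := Φ.lfp
  have hX : A \ ((A \ (X \ C₁ X)) \ C₂ (A \ (X \ C₁ X))) = X := Φ.map_lfp
  refine ⟨X, hX ▸ sdiff_subset, ?_⟩
  ext e
  have h₁ := @hC₁ X e
  have h₂ := @hC₂ (A \ (X \ C₁ X)) e
  have hXe : e ∈ X ↔ _ := Finset.ext_iff.1 hX.symm e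
  simp only [mem_sdiff] at hXe h₂ ⊢
  grind

end Substitutable

namespace HRRC

variable {R H : Type*}

section Assignment

variable [DecidableEq R] [DecidableEq H] {M : Finset (R × H)}

lemma mem_assignedTo {r : R} {h : H} : r ∈ assignedTo M h ↔ (r, h) ∈ M := by
  simp [assignedTo]

lemma mem_assignedIn {r : R} {E : Finset H} : r ∈ assignedIn M E ↔ ∃ h ∈ E, (r, h) ∈ M := by
  simp [assignedIn, and_comm]

lemma card_assignedTo (h : H) : #(assignedTo M h) = #{e ∈ M | e.2 = h} :=
  card_image_of_injOn fun _ he _ hf hef =>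
    Prod.ext hef ((mem_filter.1 he).2.trans (mem_filter.1 hf).2.symm)

lemma card_assignedIn_le (E : Finset H) : #(assignedIn M E) ≤ #{e ∈ M | e.2 ∈ E} :=
  card_image_le

lemma card_assignedIn (huniq : ∀ r h h', (r, h) ∈ M → (r, h') ∈ M → h = h') (E : Finset H) :
    #(assignedIn M E) = #{e ∈ M | e.2 ∈ E} :=
  card_image_of_injOn fun e he _ hf hef =>
    Prod.ext hef (huniq e.1 _ _ (mem_filter.1 he).1 (hef ▸ (mem_filter.1 hf).1))

lemma insert_subset_assignedIn_move {r : R} {h : H} {E : Finset H} (hh : h ∈ E) :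
    insert r (assignedIn M E) ⊆ assignedIn (move M r h) E := by
  intro x hx
  simp only [mem_insert, mem_assignedIn, move, mem_union, mem_filter, mem_singleton,
    Prod.ext_iff] at hx ⊢
  rcases hx with rfl | ⟨h', hh', hx⟩
  · exact ⟨h, hh, Or.inr ⟨rfl, rfl⟩⟩
  · by_cases hxr : x = r
    · exact ⟨h, hh, Or.inr ⟨hxr, rfl⟩⟩
    · exact ⟨h', hh', Or.inl ⟨hx, hxr⟩⟩

end Assignment

section HospitalChoice

open scoped Classical

variable [DecidableEq H] (I : HRRC R H) {β : Type*} [LinearOrder β] (κ : R × H → β)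

def shortlist (X : Finset (R × H)) : Finset (R × H) :=
  {e ∈ X | keyRank κ {f ∈ X | f.2 = e.2} e < I.q e.2}

noncomputable def hospitalChoice (X : Finset (R × H)) : Finset (R × H) :=
  {e ∈ I.shortlist κ X | ∀ E ∈ I.regions, e.2 ∈ E →
    keyRank κ {f ∈ I.shortlist κ X | f.2 ∈ E} e < I.cap E}

variable {I κ}

lemma filter_snd_shortlist (X : Finset (R × H)) (h : H) :
    {e ∈ I.shortlist κ X | e.2 = h} = keyBest κ (I.q h) {e ∈ X | e.2 = h} := by
  ext e
  simp only [shortlist, keyBest, mem_filter]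
  constructor
  · rintro ⟨⟨he, hr⟩, rfl⟩; exact ⟨⟨he, rfl⟩, hr⟩
  · rintro ⟨⟨he, rfl⟩, hr⟩; exact ⟨⟨he, hr⟩, rfl⟩

lemma hospitalChoice_subset (X : Finset (R × H)) : I.hospitalChoice κ X ⊆ X :=
  (filter_subset _ _).trans (filter_subset _ _)

lemma keyRank_shortlist_mono (hκ : Function.Injective κ) {X Y : Finset (R × H)} (hXY : X ⊆ Y)
    (E : Finset H) (a : R × H) :
    keyRank κ {f ∈ I.shortlist κ X | f.2 ∈ E} a ≤ keyRank κ {f ∈ I.shortlist κ Y | f.2 ∈ E} a := by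
  simp only [keyRank_filter_mem_eq_sum, filter_snd_shortlist, keyRank_keyBest hκ]
  exact sum_le_sum fun h _ => min_le_min_left _ (keyRank_mono (filter_subset_filter _ hXY) a)

lemma mem_hospitalChoice_of_subset (hκ : Function.Injective κ) {X Y : Finset (R × H)}
    (hXY : X ⊆ Y) {e : R × H} (he : e ∈ X) (heY : e ∈ I.hospitalChoice κ Y) :
    e ∈ I.hospitalChoice κ X := by
  simp only [hospitalChoice, mem_filter] at heY ⊢
  refine ⟨?_, fun E hE heE => (keyRank_shortlist_mono hκ hXY E e).trans_lt (heY.2 E hE heE)⟩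
  simp only [shortlist, mem_filter] at heY ⊢
  exact ⟨he, (keyRank_mono (filter_subset_filter _ hXY) e).trans_lt heY.1.2⟩

lemma substitutable_hospitalChoice [DecidableEq R] (hκ : Function.Injective κ) :
    Substitutable (I.hospitalChoice κ) := fun _ _ hXY e he => by
  rw [mem_sdiff] at he ⊢
  exact ⟨hXY he.1, fun heY => he.2 (mem_hospitalChoice_of_subset hκ hXY he.1 heY)⟩

lemma card_filter_snd_hospitalChoice_le (hκ : Function.Injective κ) (X : Finset (R × H))
    (h : H) : #{e ∈ I.hospitalChoice κ X | e.2 = h} ≤ I.q h := by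
  refine (card_le_card (filter_subset_filter _ (filter_subset _ _))).trans ?_
  rw [filter_snd_shortlist]
  exact card_keyBest_le hκ _ _

lemma filter_mem_hospitalChoice_subset (X : Finset (R × H)) {E : Finset H}
    (hE : E ∈ I.regions) :
    {e ∈ I.hospitalChoice κ X | e.2 ∈ E} ⊆
      keyBest κ (I.cap E) {f ∈ I.shortlist κ X | f.2 ∈ E} := by
  intro e he
  simp only [hospitalChoice, keyBest, mem_filter] at he ⊢
  exact ⟨⟨he.1.1, he.2⟩, he.1.2 E hE he.2⟩

lemma keyBest_subset_hospitalChoice (hdisj : I.regions.Pairwise fun E₁ E₂ => Disjoint E₁ E₂)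
    (X : Finset (R × H)) {E : Finset H} (hE : E ∈ I.regions) :
    keyBest κ (I.cap E) {f ∈ I.shortlist κ X | f.2 ∈ E} ⊆ I.hospitalChoice κ X := by
  intro e he
  simp only [hospitalChoice, keyBest, mem_filter] at he ⊢
  refine ⟨he.1.1, fun E' hE' heE' => ?_⟩
  obtain rfl := hdisj.eq hE' hE (not_disjoint_iff.2 ⟨e.2, heE', he.1.2⟩)
  exact he.2

lemma card_filter_mem_hospitalChoice_le (hκ : Function.Injective κ) (X : Finset (R × H))
    {E : Finset H} (hE : E ∈ I.regions) : #{e ∈ I.hospitalChoice κ X | e.2 ∈ E} ≤ I.cap E :=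
  (card_le_card (filter_mem_hospitalChoice_subset X hE)).trans (card_keyBest_le hκ _ _)

lemma le_keyRank_of_notMem_hospitalChoice (hκ : Function.Injective κ)
    (hdisj : I.regions.Pairwise fun E₁ E₂ => Disjoint E₁ E₂) {X : Finset (R × H)} {e : R × H}
    (heX : e ∈ X) (he : e ∉ I.hospitalChoice κ X) :
    I.q e.2 ≤ keyRank κ {f ∈ I.hospitalChoice κ X | f.2 = e.2} e ∨
      ∃ E ∈ I.regions, e.2 ∈ E ∧ I.cap E ≤ keyRank κ {f ∈ I.hospitalChoice κ X | f.2 ∈ E} e := by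
  have region : ∀ b ∈ I.shortlist κ X, b ∉ I.hospitalChoice κ X → ∃ E ∈ I.regions,
      b.2 ∈ E ∧ I.cap E ≤ keyRank κ {f ∈ I.hospitalChoice κ X | f.2 ∈ E} b := by
    intro b hb hbn
    obtain ⟨E, hE, hbE, hcap⟩ : ∃ E ∈ I.regions, b.2 ∈ E ∧
        I.cap E ≤ keyRank κ {f ∈ I.shortlist κ X | f.2 ∈ E} b := by
      simpa [hospitalChoice, hb] using hbn
    refine ⟨E, hE, hbE, ?_⟩
    calc I.cap E = keyRank κ (keyBest κ (I.cap E) {f ∈ I.shortlist κ X | f.2 ∈ E}) b := by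
          rw [keyRank_keyBest hκ, min_eq_left hcap]
      _ ≤ keyRank κ {f ∈ I.hospitalChoice κ X | f.2 ∈ E} b :=
          keyRank_mono (fun f hf => mem_filter.2 ⟨keyBest_subset_hospitalChoice hdisj X hE hf,
            (mem_filter.1 (keyBest_subset _ _ hf)).2⟩) b
  by_cases hs : e ∈ I.shortlist κ X
  · exact Or.inr (region e hs he)
  have hq : I.q e.2 ≤ keyRank κ {f ∈ I.shortlist κ X | f.2 = e.2} e := by
    simp only [shortlist, mem_filter, heX, true_and, not_lt] at hs
    rw [filter_snd_shortlist, keyRank_keyBest hκ, min_eq_left hs]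
  by_cases hall : ∀ b ∈ I.shortlist κ X, b.2 = e.2 → κ b < κ e → b ∈ I.hospitalChoice κ X
  · refine Or.inl (hq.trans (card_le_card fun b hb => ?_))
    simp only [mem_filter] at hb ⊢
    exact ⟨⟨hall b hb.1.1 hb.1.2 hb.2, hb.1.2⟩, hb.2⟩
  · push Not at hall
    obtain ⟨b, hb, hbe, hlt, hbn⟩ := hall
    obtain ⟨E, hE, hbE, hcap⟩ := region b hb hbn
    exact Or.inr ⟨E, hE, hbe ▸ hbE, hcap.trans (keyRank_le_keyRank _ hlt.le)⟩

end HospitalChoice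

section ResidentChoice

variable [DecidableEq R] [DecidableEq H] (I : HRRC R H)

def residentChoice (X : Finset (R × H)) : Finset (R × H) :=
  {e ∈ X | ∀ f ∈ X, f.1 = e.1 → (I.prefR e.1).idxOf e.2 ≤ (I.prefR e.1).idxOf f.2}

variable {I} {X : Finset (R × H)} {r : R} {h h' : H}

lemma residentChoice_subset (X : Finset (R × H)) : I.residentChoice X ⊆ X := filter_subset _ _

lemma substitutable_residentChoice : Substitutable I.residentChoice := fun X Y hXY e he => by
  obtain ⟨heX, hne⟩ := mem_sdiff.1 he
  simp only [residentChoice, mem_filter, heX, true_and, not_forall, not_le] at hne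
  obtain ⟨f, hf, hfe, hlt⟩ := hne
  exact mem_sdiff.2 ⟨hXY heX, fun heY => ((mem_filter.1 heY).2 f (hXY hf) hfe).not_gt hlt⟩

lemma idxOf_le_of_mem_residentChoice (hh' : (r, h') ∈ I.residentChoice X) (hh : (r, h) ∈ X) :
    (I.prefR r).idxOf h' ≤ (I.prefR r).idxOf h :=
  (mem_filter.1 hh').2 _ hh rfl

lemma exists_mem_residentChoice (hh : (r, h) ∈ X) : ∃ h', (r, h') ∈ I.residentChoice X := by
  obtain ⟨g, hg, hgmin⟩ := exists_min_image {f ∈ X | f.1 = r}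
    (fun f => (I.prefR r).idxOf f.2) ⟨(r, h), mem_filter.2 ⟨hh, rfl⟩⟩
  obtain ⟨hgX, rfl⟩ := mem_filter.1 hg
  exact ⟨g.2, mem_filter.2 ⟨hgX, fun f hf hfg => hgmin f (mem_filter.2 ⟨hf, hfg⟩)⟩⟩

lemma residentChoice_unique (hX : ∀ e ∈ X, e.2 ∈ I.prefR e.1)
    (hh : (r, h) ∈ I.residentChoice X) (hh' : (r, h') ∈ I.residentChoice X) : h = h' :=
  (List.idxOf_inj (hX _ (residentChoice_subset X hh))).1 <| le_antisymm
    (idxOf_le_of_mem_residentChoice hh (residentChoice_subset X hh'))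
    (idxOf_le_of_mem_residentChoice hh' (residentChoice_subset X hh))

lemma not_isBlockingPair_residentChoice (hh : (r, h) ∈ X) :
    ¬ I.IsBlockingPair (I.residentChoice X) r h := by
  rintro ⟨-, -, hnone | ⟨h', hh', hpref⟩, -⟩
  · obtain ⟨h', hh'⟩ := exists_mem_residentChoice hh
    exact hnone h' hh'
  · exact (idxOf_le_of_mem_residentChoice hh' hh).not_gt hpref.2

end ResidentChoice

section AcceptablePairs

variable [DecidableEq H] [Fintype R] [Fintype H] (I : HRRC R H)

def acceptablePairs : Finset (R × H) := {e | e.2 ∈ I.prefR e.1}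

variable {I} in
lemma mem_acceptablePairs {e : R × H} : e ∈ I.acceptablePairs ↔ e.2 ∈ I.prefR e.1 := by
  simp [acceptablePairs]

end AcceptablePairs

section Stability

variable [DecidableEq R] [DecidableEq H] (I : HRRC R H) {β : Type*} [LinearOrder β]
  (κ : R × H → β)

def RespectsHospitalPrefs : Prop :=
  ∀ h r r', ListPref (I.prefH h) r r' → κ (r, h) < κ (r', h)

def RespectsRegionalPrefs : Prop :=
  ∀ E ∈ I.regions, ∀ r h h', h ∈ E → h' ∈ E → r ∈ I.prefH h → r ∈ I.prefH h' →
    ListPref (I.prefR r) h h' → κ (r, h) < κ (r, h')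

variable {I κ} {M : Finset (R × H)} {r : R} {h : H}

lemma not_exists_listPref_of_forall_lt (hκH : I.RespectsHospitalPrefs κ)
    (hbetter : ∀ f ∈ M, f.2 = h → κ f < κ (r, h)) :
    ¬ ∃ r' ∈ assignedTo M h, ListPref (I.prefH h) r r' := by
  rintro ⟨r', hr', hpref⟩
  exact (hbetter _ (mem_assignedTo.1 hr') rfl).asymm (hκH h r r' hpref)

lemma not_isBlockingPair_of_hospital_full (hκH : I.RespectsHospitalPrefs κ)
    (hcap : #{f ∈ M | f.2 = h} ≤ I.q h) (hfull : I.q h ≤ keyRank κ {f ∈ M | f.2 = h} (r, h)) :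
    ¬ I.IsBlockingPair M r h := by
  have hbetter := forall_lt_of_card_le_keyRank (hcap.trans hfull)
  rintro ⟨-, -, -, hroom | hworse⟩
  · rw [card_assignedTo] at hroom
    exact hroom.not_ge (hfull.trans (keyRank_le_card _ _))
  · exact not_exists_listPref_of_forall_lt hκH
      (fun f hf hfh => hbetter f (mem_filter.2 ⟨hf, hfh⟩)) hworse

lemma not_isSBP_of_region_full (hκH : I.RespectsHospitalPrefs κ)
    (hκR : I.RespectsRegionalPrefs κ) (hacc : ∀ p ∈ M, p.1 ∈ I.prefH p.2)
    (huniq : ∀ r h h', (r, h) ∈ M → (r, h') ∈ M → h = h') {E : Finset H}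
    (hE : E ∈ I.regions) (hhE : h ∈ E) (hcap : #{f ∈ M | f.2 ∈ E} ≤ I.cap E)
    (hfull : I.cap E ≤ keyRank κ {f ∈ M | f.2 ∈ E} (r, h)) : ¬ I.IsSBP M r h := by
  have hbetter (f : R × H) (hf : f ∈ M) (hfE : f.2 ∈ E) : κ f < κ (r, h) :=
    forall_lt_of_card_le_keyRank (hcap.trans hfull) f (mem_filter.2 ⟨hf, hfE⟩)
  rintro ⟨⟨-, ⟨-, hrh⟩, hres, -⟩, hstrong⟩
  by_cases hrE : r ∈ assignedIn M E
  · obtain ⟨h₂, hh₂E, hrh₂⟩ := mem_assignedIn.1 hrE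
    rcases hres with hnone | ⟨h', hrh', hpref⟩
    · exact hnone h₂ hrh₂
    · obtain rfl := huniq _ _ _ hrh' hrh₂
      exact (hbetter _ hrh₂ hh₂E).asymm (hκR E hE r h h' hhE hh₂E hrh (hacc _ hrh₂) hpref)
  · have hmove := hstrong.resolve_right
      (not_exists_listPref_of_forall_lt hκH fun f hf hfh => hbetter f hf (hfh ▸ hhE)) E hE
    have hgrow := card_le_card (insert_subset_assignedIn_move (M := M) (r := r) hhE)
    rw [card_insert_of_notMem hrE, card_assignedIn huniq] at hgrow
    have := keyRank_le_card (κ := κ) {f ∈ M | f.2 ∈ E} (r, h)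
    omega

variable [Fintype R] [Fintype H]

theorem isStronglyStable_hospitalChoice (hwf : I.WellFormed)
    (hdisj : I.regions.Pairwise fun E₁ E₂ => Disjoint E₁ E₂) (hκ : Function.Injective κ)
    (hκH : I.RespectsHospitalPrefs κ) (hκR : I.RespectsRegionalPrefs κ)
    {X : Finset (R × H)} (hX : X ⊆ I.acceptablePairs)
    (hfix : I.hospitalChoice κ X =
      I.residentChoice (I.acceptablePairs \ (X \ I.hospitalChoice κ X))) :
    I.IsStronglyStable (I.hospitalChoice κ X) := by
  set M := I.hospitalChoice κ X
  have hMA (p : R × H) (hp : p ∈ M) : p.2 ∈ I.prefR p.1 :=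
    mem_acceptablePairs.1 (hX (hospitalChoice_subset X hp))
  have hacc (p : R × H) (hp : p ∈ M) : p.1 ∈ I.prefH p.2 := (hwf.2.2.1 _ _).1 (hMA p hp)
  have huniq : ∀ r h h', (r, h) ∈ M → (r, h') ∈ M → h = h' := by
    rw [hfix]
    exact fun r h h' => residentChoice_unique fun e he => mem_acceptablePairs.1 (mem_sdiff.1 he).1
  have hcap := card_filter_snd_hospitalChoice_le (I := I) hκ X
  have hregion (E : Finset H) (hE : E ∈ I.regions) := card_filter_mem_hospitalChoice_le hκ X hE
  refine ⟨⟨fun p hp => ⟨hMA p hp, hacc p hp⟩, huniq, fun h => (card_assignedTo h).trans_le (hcap h)⟩,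
    fun E hE => (card_assignedIn_le E).trans (hregion E hE), fun r h hsbp => ?_⟩
  have hrhA : (r, h) ∈ I.acceptablePairs := mem_acceptablePairs.2 hsbp.1.2.1.1
  by_cases hXR : (r, h) ∈ I.acceptablePairs \ (X \ M)
  · rw [hfix] at hsbp
    exact not_isBlockingPair_residentChoice hXR hsbp.1
  obtain ⟨hrhX, hrhM⟩ : (r, h) ∈ X ∧ (r, h) ∉ M := by simpa [hrhA] using hXR
  rcases le_keyRank_of_notMem_hospitalChoice hκ hdisj hrhX hrhM with hfull | ⟨E, hE, hhE, hfull⟩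
  · exact not_isBlockingPair_of_hospital_full hκH (hcap h) hfull hsbp.1
  · exact not_isSBP_of_region_full hκH hκR hacc huniq hE hhE (hregion E hE) hfull hsbp

end Stability

section Priority

variable [DecidableEq R] [DecidableEq H] [Fintype R] [Fintype H] (I : HRRC R H)

/-- A hospital is put in the lower tier when some resident acceptable to it and to another
hospital of its region prefers the other one. In a (2,2,2)-free instance that resident is the
region's unique common resident, so within a region the tiers follow its preferences. -/
noncomputable def tier (h : H) : ℕ :=
  open Classical in
  if ∃ E ∈ I.regions, h ∈ E ∧ ∃ h' ∈ E, ∃ r ∈ I.prefH h, r ∈ I.prefH h' ∧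
    ListPref (I.prefR r) h' h then 1 else 0

noncomputable def priority (e : R × H) : (ℕ ×ₗ ℕ) ×ₗ Fin (Fintype.card (R × H)) :=
  toLex (toLex (I.tier e.2, (I.prefH e.2).idxOf e.1), Fintype.equivFin _ e)

lemma priority_injective : Function.Injective I.priority := fun _ _ hab =>
  (Fintype.equivFin _).injective (congrArg Prod.snd (toLex.injective hab))

lemma respectsHospitalPrefs_priority : I.RespectsHospitalPrefs I.priority := fun _ _ _ hpref =>
  Prod.Lex.toLex_lt_toLex.2 (Or.inl (Prod.Lex.toLex_lt_toLex.2 (Or.inr ⟨rfl, hpref.2⟩)))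

lemma respectsRegionalPrefs_priority (hdisj : I.regions.Pairwise fun E₁ E₂ => Disjoint E₁ E₂)
    (hγ : ∀ E ∈ I.regions, E.card ≤ 2)
    (hcommon : ∀ E ∈ I.regions, E.card = 2 →
      ∀ r r' : R, (∀ h ∈ E, r ∈ I.prefH h) → (∀ h ∈ E, r' ∈ I.prefH h) → r = r') :
    I.RespectsRegionalPrefs I.priority := by
  intro E hE r h h' hh hh' hrh hrh' hpref
  have hne : h ≠ h' := by rintro rfl; exact lt_irrefl _ hpref.2
  have hE2 : E = {h, h'} := (eq_of_subset_of_card_le (insert_subset hh (singleton_subset_iff.2 hh'))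
    ((hγ E hE).trans (card_pair hne).ge)).symm
  have hlower : I.tier h' = 1 := if_pos ⟨E, hE, hh', h, hh, r, hrh', hrh, hpref⟩
  have hupper : I.tier h = 0 := by
    refine if_neg ?_
    rintro ⟨E', hE', hhE', h'', hh'', r', hr'h, hr'h'', hpref'⟩
    obtain rfl := hdisj.eq hE' hE (not_disjoint_iff.2 ⟨h, hhE', hh⟩)
    obtain rfl : h'' = h' := by
      rw [hE2, mem_insert, mem_singleton] at hh''
      exact hh''.resolve_left (by rintro rfl; exact lt_irrefl _ hpref'.2)
    obtain rfl := hcommon E' hE' (hE2 ▸ card_pair hne) r r' (by simp [hE2, hrh, hrh'])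
      (by simp [hE2, hr'h, hr'h''])
    exact lt_asymm hpref.2 hpref'.2
  refine Prod.Lex.toLex_lt_toLex.2 (Or.inl (Prod.Lex.toLex_lt_toLex.2 (Or.inl ?_)))
  simp [hlower, hupper]

end Priority

end HRRC

theorem twotwotwo_free_HRRCDR_has_strongly_stable_matching_general
    {R H : Type*} [DecidableEq R] [DecidableEq H] [Fintype R] [Fintype H]
    (I : HRRC R H) (hwf : I.WellFormed)
    (hdisj : I.regions.Pairwise fun E₁ E₂ => Disjoint E₁ E₂)
    (hγ : ∀ E ∈ I.regions, E.card ≤ 2)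
    (hcommon : ∀ E ∈ I.regions, E.card = 2 →
      ∀ r r' : R, (∀ h ∈ E, r ∈ I.prefH h) → (∀ h ∈ E, r' ∈ I.prefH h) → r = r') :
    ∃ M : Finset (R × H), I.IsStronglyStable M := by
  obtain ⟨X, hX, hfix⟩ := exists_choice_eq_of_substitutable I.acceptablePairs
    I.hospitalChoice_subset I.residentChoice_subset
    (I.substitutable_hospitalChoice I.priority_injective) I.substitutable_residentChoice
  exact ⟨_, I.isStronglyStable_hospitalChoice hwf hdisj I.priority_injective
    I.respectsHospitalPrefs_priority (I.respectsRegionalPrefs_priority hdisj hγ hcommon) hX hfix⟩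

/-- Every HRRCDR instance (regions pairwise disjoint) in which each resident's list
has length ≤ 2, each hospital's list has length ≤ 2, every region has size ≤ 2, and
for every region of size 2 at most one resident is acceptable to both of its
hospitals, admits a strongly stable matching. -/
theorem twotwotwo_free_HRRCDR_has_strongly_stable_matching
    {R H : Type*} [DecidableEq R] [DecidableEq H] [Fintype R] [Fintype H]
    (I : HRRC R H) (hwf : I.WellFormed)
    (hdisj : I.regions.Pairwise fun E₁ E₂ => Disjoint E₁ E₂)
    (hα : ∀ r, (I.prefR r).length ≤ 2)
    (hβ : ∀ h, (I.prefH h).length ≤ 2)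
    (hγ : ∀ E ∈ I.regions, E.card ≤ 2)
    (hcommon : ∀ E ∈ I.regions, E.card = 2 →
      ∀ r r' : R, (∀ h ∈ E, r ∈ I.prefH h) → (∀ h ∈ E, r' ∈ I.prefH h) → r = r') :
    ∃ M : Finset (R × H), I.IsStronglyStable M :=
  twotwotwo_free_HRRCDR_has_strongly_stable_matching_general I hwf hdisj hγ hcommon
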